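/- arXiv:2107.14602 — 4 statements merged into one kernel-verified Lean document; each statement's English description precedes it below -/
import Mathlib

section
/- Let A be an n×m matrix with entries in {0,...,p-1} and let X be the transposition matrix swapping rows u and v (u < v). If r(XA) < r(A) in the lexicographic order, then c(XA) < c(A) in the lexicographic order. -/
def rowCode (p n m : ℕ) (A : Fin n → Fin m → Fin p) : Fin n → ℕ :=
  fun i => ∑ j : Fin m, (A i j : ℕ) * p ^ (m - 1 - (j : ℕ))

def colCode (p n m : ℕ) (A : Fin n → Fin m → Fin p) : Fin m → ℕ :=
  fun j => ∑ i : Fin n, (A i j : ℕ) * p ^ (n - 1 - (i : ℕ))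

def MatEquiv (p n m : ℕ) (A B : Fin n → Fin m → Fin p) : Prop :=
  ∃ (σ : Equiv.Perm (Fin n)) (τ : Equiv.Perm (Fin m)), ∀ i j, A i j = B (σ i) (τ j)

def Canonical (p n m : ℕ) (A : Fin n → Fin m → Fin p) : Prop :=
  ∀ B : Fin n → Fin m → Fin p, MatEquiv p n m B A →
    toLex (rowCode p n m A) ≤ toLex (rowCode p n m B)

def SemiCanonical (p n m : ℕ) (A : Fin n → Fin m → Fin p) : Prop :=
  Monotone (rowCode p n m A) ∧ Monotone (colCode p n m A)

/-!
Reading a tuple of base-`p` digits as a number is an order isomorphism onto its image from the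
lexicographic order. Hence `r(XA) < r(A)` says that the swap lexicographically decreases the tuple
of rows, which happens exactly when row `v` is smaller than row `u`. At the first column `j` where
these two rows differ, `A v j < A u j`; the columns of `XA` before `j` are those of `A`, and column
`j` of `XA` is column `j` of `A` with the entries `u` and `v` exchanged, hence smaller.
-/

/-- Most significant digit first, unlike `Nat.ofDigits`: `rowCode` and `colCode` apply this to the
rows and the columns. -/
def ofDigitsTuple (p : ℕ) {m : ℕ} (d : Fin m → Fin p) : ℕ :=
  ∑ j, (d j : ℕ) * p ^ (m - 1 - (j : ℕ))

section ofDigitsTuple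

variable {p m : ℕ}

lemma ofDigitsTuple_succ (d : Fin (m + 1) → Fin p) :
    ofDigitsTuple p d = d 0 * p ^ m + ofDigitsTuple p (Fin.tail d) := by
  simp only [ofDigitsTuple, Fin.sum_univ_succ, Fin.val_zero, Fin.val_succ, Fin.tail]
  congr 1
  exact Finset.sum_congr rfl fun i _ => by congr 2; omega

lemma ofDigitsTuple_lt_pow (d : Fin m → Fin p) : ofDigitsTuple p d < p ^ m := by
  induction m with
  | zero => simp [ofDigitsTuple]
  | succ m ih =>
    have hd0 : (d 0 : ℕ) + 1 ≤ p := (d 0).isLt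
    calc ofDigitsTuple p d = d 0 * p ^ m + ofDigitsTuple p (Fin.tail d) := ofDigitsTuple_succ d
      _ < (d 0 + 1) * p ^ m := by rw [add_one_mul]; exact Nat.add_lt_add_left (ih _) _
      _ ≤ p ^ (m + 1) := by rw [pow_succ']; exact Nat.mul_le_mul_right _ hd0

lemma ofDigitsTuple_lt_of_toLex_lt {d e : Fin m → Fin p} (hde : toLex d < toLex e) :
    ofDigitsTuple p d < ofDigitsTuple p e := by
  induction m with
  | zero => exact absurd hde (by rw [Subsingleton.elim d e]; exact lt_irrefl _)
  | succ m ih =>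
    rw [← Fin.cons_self_tail d, ← Fin.cons_self_tail e] at hde
    rw [ofDigitsTuple_succ d, ofDigitsTuple_succ e]
    rcases (Fin.pi_lex_lt_cons_cons _).1 hde with h0 | ⟨h0, htail⟩
    · calc d 0 * p ^ m + ofDigitsTuple p (Fin.tail d)
          < (d 0 + 1) * p ^ m := by
            rw [add_one_mul]; exact Nat.add_lt_add_left (ofDigitsTuple_lt_pow _) _
        _ ≤ e 0 * p ^ m := Nat.mul_le_mul_right _ (Fin.lt_def.1 h0)
        _ ≤ _ := Nat.le_add_right _ _
    · rw [h0]
      exact Nat.add_lt_add_left (ih htail) _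

lemma ofDigitsTuple_lt_iff {d e : Fin m → Fin p} :
    ofDigitsTuple p d < ofDigitsTuple p e ↔ toLex d < toLex e :=
  StrictMono.lt_iff_lt (f := fun d : Lex (Fin m → Fin p) => ofDigitsTuple p (ofLex d))
    fun _ _ => ofDigitsTuple_lt_of_toLex_lt

end ofDigitsTuple

lemma Pi.toLex_comp_swap_lt_iff {ι α : Type*} [LinearOrder ι] [WellFoundedLT ι] [LinearOrder α]
    {f : ι → α} {u v : ι} (huv : u ≤ v) :
    toLex (f ∘ Equiv.swap u v) < toLex f ↔ f v < f u := by
  refine ⟨fun h => ?_, Pi.lex_desc huv⟩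
  by_contra! hle
  rcases hle.lt_or_eq with hlt | heq
  · have := Pi.lex_desc (f := f ∘ Equiv.swap u v) huv (by simpa using hlt)
    rw [show (f ∘ Equiv.swap u v) ∘ Equiv.swap u v = f from funext fun k => by simp] at this
    exact lt_asymm h this
  · exact h.ne (funext fun k => Equiv.apply_swap_eq_self heq k)

theorem stmt3_general (p n m : ℕ) (A : Fin n → Fin m → Fin p)
    (u v : Fin n) (huv : u < v)
    (XA : Fin n → Fin m → Fin p) (hXA : XA = fun i j => A (Equiv.swap u v i) j)
    (h : toLex (rowCode p n m XA) < toLex (rowCode p n m A)) :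
    toLex (colCode p n m XA) < toLex (colCode p n m A) := by
  subst hXA
  have hrows : toLex (A v) < toLex (A u) := by
    rw [← ofDigitsTuple_lt_iff]
    change rowCode p n m A v < rowCode p n m A u
    rw [← Pi.toLex_comp_swap_lt_iff huv.le]
    exact h
  obtain ⟨j, hprefix, hj⟩ := hrows
  refine ⟨j, fun k hk => ?_, ?_⟩
  · change ofDigitsTuple p (fun i => A (Equiv.swap u v i) k) = ofDigitsTuple p (fun i => A i k)
    exact congrArg _ (funext (Equiv.apply_swap_eq_self (v := fun i => A i k) (hprefix k hk).symm))
  · change ofDigitsTuple p ((fun i => A i j) ∘ Equiv.swap u v) < ofDigitsTuple p (fun i => A i j)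
    rw [ofDigitsTuple_lt_iff, Pi.toLex_comp_swap_lt_iff huv.le]
    exact hj

/-- if swapping rows `u` and `v` (`u < v`) strictly decreases `r`
lexicographically, then it strictly decreases `c` lexicographically. -/
theorem stmt3 (p n m : ℕ) (hp : 2 ≤ p) (A : Fin n → Fin m → Fin p)
    (u v : Fin n) (huv : u < v)
    (XA : Fin n → Fin m → Fin p) (hXA : XA = fun i j => A (Equiv.swap u v i) j)
    (h : toLex (rowCode p n m XA) < toLex (rowCode p n m A)) :
    toLex (colCode p n m XA) < toLex (colCode p n m A) :=
  stmt3_general p n m A u v huv XA hXA h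
end

section
/- Let A be an n×m matrix with entries in {0,...,p-1} and let X be a row transposition. If r(XA) > r(A) lexicographically, then c(XA) > c(A) lexicographically. -/
/-!
Reading a row or a column as a big-endian base-`p` numeral turns the lexicographic order of
digit tuples into the order of `ℕ`. Swapping rows `u < v` permutes the tuple of row codes, which
first changes at position `u`; so `r(XA) > r(A)` means that row `u` of `A` is lexicographically
below row `v`: they agree before some column `j` and `A u j < A v j`. The swap therefore fixes
the columns before `j` and moves the larger entry of column `j` to the more significant
position `u`, so the code of column `j` grows.
-/

def ofDigitsBE (p m : ℕ) (x : Fin m → Fin p) : ℕ :=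
  ∑ j : Fin m, (x j : ℕ) * p ^ (m - 1 - (j : ℕ))

section ofDigitsBE

variable {p m : ℕ}

lemma ofDigitsBE_succ (x : Fin (m + 1) → Fin p) :
    ofDigitsBE p (m + 1) x = x 0 * p ^ m + ofDigitsBE p m (Fin.tail x) := by
  simp [ofDigitsBE, Fin.sum_univ_succ, Fin.tail, Nat.sub_sub, Nat.add_comm 1]

lemma ofDigitsBE_lt_pow (x : Fin m → Fin p) : ofDigitsBE p m x < p ^ m := by
  induction m with
  | zero => simp [ofDigitsBE]
  | succ m ih =>
    calc ofDigitsBE p (m + 1) x = x 0 * p ^ m + ofDigitsBE p m (Fin.tail x) := ofDigitsBE_succ x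
      _ < (x 0 + 1) * p ^ m := by rw [add_one_mul]; exact Nat.add_lt_add_left (ih _) _
      _ ≤ p ^ (m + 1) := by rw [pow_succ']; exact Nat.mul_le_mul_right _ (x 0).isLt

lemma ofDigitsBE_lt_ofDigitsBE_of_lex {x y : Fin m → Fin p} (h : toLex x < toLex y) :
    ofDigitsBE p m x < ofDigitsBE p m y := by
  induction m with
  | zero => obtain ⟨i, -⟩ := h; exact i.elim0
  | succ m ih =>
    rw [← Fin.cons_self_tail x, ← Fin.cons_self_tail y] at h
    rw [ofDigitsBE_succ, ofDigitsBE_succ]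
    rcases (Fin.pi_lex_lt_cons_cons (α := fun _ => Fin p) (· < ·)).1 h with hlt | ⟨heq, htail⟩
    · calc x 0 * p ^ m + ofDigitsBE p m (Fin.tail x) < (x 0 + 1) * p ^ m := by
            rw [add_one_mul]; exact Nat.add_lt_add_left (ofDigitsBE_lt_pow _) _
        _ ≤ y 0 * p ^ m := Nat.mul_le_mul_right _ hlt
        _ ≤ _ := Nat.le_add_right _ _
    · rw [heq]
      exact Nat.add_lt_add_left (ih htail) _

lemma strictMono_ofDigitsBE : StrictMono fun x : Lex (Fin m → Fin p) => ofDigitsBE p m (ofLex x) :=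
  fun _ _ => ofDigitsBE_lt_ofDigitsBE_of_lex

lemma ofDigitsBE_lt_ofDigitsBE_iff {x y : Fin m → Fin p} :
    ofDigitsBE p m x < ofDigitsBE p m y ↔ toLex x < toLex y :=
  strictMono_ofDigitsBE.lt_iff_lt

end ofDigitsBE

lemma Pi.toLex_lt_toLex_comp_swap_iff {ι α : Type*} [LinearOrder ι] [WellFoundedLT ι]
    [LinearOrder α] {f : ι → α} {i j : ι} (hij : i ≤ j) :
    toLex f < toLex (f ∘ Equiv.swap i j) ↔ f i < f j := by
  refine ⟨fun h => ?_, fun h => ?_⟩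
  · rcases lt_trichotomy (f i) (f j) with hlt | heq | hgt
    · exact hlt
    · have hfix : f ∘ Equiv.swap i j = f := funext (Equiv.apply_swap_eq_self heq)
      exact absurd (hfix ▸ h) (lt_irrefl _)
    · exact absurd h (Pi.lex_desc hij hgt).asymm
  · have hswap : (f ∘ Equiv.swap i j) ∘ Equiv.swap i j = f :=
      funext fun k => congrArg f (Equiv.swap_apply_self i j k)
    simpa only [hswap] using Pi.lex_desc (f := f ∘ Equiv.swap i j) hij (by simpa using h)

lemma colCode_lt_colCode_swap_of_rowCode_lt {p n m : ℕ} (A : Fin n → Fin m → Fin p)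
    {u v : Fin n} (huv : u ≤ v)
    (h : toLex (rowCode p n m A) < toLex (rowCode p n m fun i j => A (Equiv.swap u v i) j)) :
    toLex (colCode p n m A) < toLex (colCode p n m fun i j => A (Equiv.swap u v i) j) := by
  have hrows : toLex (A u) < toLex (A v) := by
    rw [← ofDigitsBE_lt_ofDigitsBE_iff]
    exact (Pi.toLex_lt_toLex_comp_swap_iff huv).1 h
  obtain ⟨j, hagree, hj⟩ := hrows
  refine ⟨j, fun k hk => ?_, ?_⟩
  · show ofDigitsBE p n (fun i => A i k) = ofDigitsBE p n (fun i => A (Equiv.swap u v i) k)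
    rw [funext (Equiv.apply_swap_eq_self (v := fun i => A i k) (hagree k hk))]
  · exact ofDigitsBE_lt_ofDigitsBE_of_lex ((Pi.toLex_lt_toLex_comp_swap_iff huv).2 hj)

theorem stmt7_general (p n m : ℕ) (A : Fin n → Fin m → Fin p)
    (u v : Fin n)
    (XA : Fin n → Fin m → Fin p) (hXA : XA = fun i j => A (Equiv.swap u v i) j)
    (h : toLex (rowCode p n m A) < toLex (rowCode p n m XA)) :
    toLex (colCode p n m A) < toLex (colCode p n m XA) := by
  subst hXA
  rcases le_total u v with huv | hvu
  · exact colCode_lt_colCode_swap_of_rowCode_lt A huv h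
  · rw [Equiv.swap_comm] at h ⊢
    exact colCode_lt_colCode_swap_of_rowCode_lt A hvu h

/-- dual theorem: if swapping two rows strictly increases `r`
lexicographically, then it strictly increases `c` lexicographically. -/
theorem stmt7 (p n m : ℕ) (hp : 2 ≤ p) (A : Fin n → Fin m → Fin p)
    (u v : Fin n) (huv : u ≠ v)
    (XA : Fin n → Fin m → Fin p) (hXA : XA = fun i j => A (Equiv.swap u v i) j)
    (h : toLex (rowCode p n m A) < toLex (rowCode p n m XA)) :
    toLex (colCode p n m A) < toLex (colCode p n m XA) :=
  stmt7_general p n m A u v XA hXA h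
end

section
/- Every canonical n×m matrix A with entries in {0,...,p-1} is semi-canonical: both r(A) and c(A) are weakly increasing. -/
-- `rowCode` and `colCode` are, definitionally, the `lexCode`s of the rows and the columns.
def lexCode (p N : ℕ) (d : Fin N → Fin p) : ℕ :=
  ∑ i : Fin N, (d i : ℕ) * p ^ (N - 1 - (i : ℕ))

section lexCode

variable {p : ℕ}

theorem lexCode_cons {N : ℕ} (a : Fin p) (d : Fin N → Fin p) :
    lexCode p (N + 1) (Fin.cons a d) = a * p ^ N + lexCode p N d := by
  rw [lexCode, Fin.sum_univ_succ]
  congr 1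
  refine Finset.sum_congr rfl fun i _ => ?_
  rw [Fin.cons_succ, Fin.val_succ]
  congr 2
  omega

theorem lexCode_lt_pow {N : ℕ} (d : Fin N → Fin p) : lexCode p N d < p ^ N := by
  induction N with
  | zero => simp [lexCode]
  | succ N ih =>
    induction d using Fin.consCases with
    | cons a d =>
      calc lexCode p (N + 1) (Fin.cons a d) = a * p ^ N + lexCode p N d := lexCode_cons a d
        _ < (a + 1) * p ^ N := by rw [add_one_mul]; exact Nat.add_lt_add_left (ih d) _
        _ ≤ p * p ^ N := Nat.mul_le_mul_right _ a.is_lt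
        _ = p ^ (N + 1) := (pow_succ' p N).symm

theorem lexCode_lt_lexCode {N : ℕ} {d e : Fin N → Fin p} (h : toLex d < toLex e) :
    lexCode p N d < lexCode p N e := by
  induction N with
  | zero => exact absurd h (Subsingleton.elim (toLex d) (toLex e)).not_lt
  | succ N ih =>
    induction d using Fin.consCases with
    | cons a d =>
    induction e using Fin.consCases with
    | cons b e =>
    rw [lexCode_cons, lexCode_cons]
    rcases (Fin.pi_lex_lt_cons_cons _).1 h with hab | ⟨rfl, hde⟩
    · calc a * p ^ N + lexCode p N d < (a + 1) * p ^ N := by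
            rw [add_one_mul]; exact Nat.add_lt_add_left (lexCode_lt_pow d) _
        _ ≤ b * p ^ N := Nat.mul_le_mul_right _ hab
        _ ≤ b * p ^ N + lexCode p N e := Nat.le_add_right _ _
    · exact Nat.add_lt_add_left (ih hde) _

theorem strictMono_lexCode {N : ℕ} : StrictMono (lexCode p N ∘ ofLex) :=
  fun _ _ => lexCode_lt_lexCode

end lexCode

namespace Canonical

variable {p n m : ℕ} {A : Fin n → Fin m → Fin p}

theorem monotone_rowCode (hA : Canonical p n m A) : Monotone (rowCode p n m A) := by
  refine monotone_iff_forall_lt.2 fun i j hij => not_lt.1 fun hji => ?_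
  have hswap := hA (fun r => A (Equiv.swap i j r)) ⟨Equiv.swap i j, 1, fun _ _ => rfl⟩
  exact (Pi.lex_desc hij.le hji).not_ge hswap

theorem monotone_colCode (hA : Canonical p n m A) : Monotone (colCode p n m A) := by
  refine monotone_iff_forall_lt.2 fun j k hjk => not_lt.1 fun hkj => ?_
  obtain ⟨i₀, hagree, hlt⟩ : toLex (fun i => A i k) < toLex (fun i => A i j) :=
    strictMono_lexCode.lt_iff_lt.1 hkj
  have hswap := hA (fun r c => A r (Equiv.swap j k c)) ⟨1, Equiv.swap j k, fun _ _ => rfl⟩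
  refine hswap.not_gt ⟨i₀, fun i hi => ?_, ?_⟩
  · exact congrArg (lexCode p m) (funext (Equiv.apply_swap_eq_self (hagree i hi).symm))
  · exact lexCode_lt_lexCode (Pi.lex_desc hjk.le hlt)

end Canonical

theorem stmt10_general (p n m : ℕ)
    (A : Fin n → Fin m → Fin p) (hA : Canonical p n m A) :
    SemiCanonical p n m A :=
  ⟨hA.monotone_rowCode, hA.monotone_colCode⟩

/-- every canonical matrix is semi-canonical. -/
theorem stmt10 (p n m : ℕ) (hp : 2 ≤ p)
    (A : Fin n → Fin m → Fin p) (hA : Canonical p n m A) :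
    SemiCanonical p n m A :=
  stmt10_general p n m A hA
end

section
/- If A is a canonical n×m matrix with entries in {0,...,p-1} and its first row has exactly s nonzero entries, then (p^s - 1)/(p - 1) ≤ x_1 ≤ p^s - 1, where x_1 is the base-p number encoded by the first row. -/
/-!
The lower bound holds for every matrix: the `s` nonzero digits of the first row carry `s`
distinct powers of `p`, whose sum is at least `1 + p + ⋯ + p^(s-1) = (p^s - 1)/(p - 1)`.
For the upper bound, permute the columns so that these digits occupy the last `s` columns.
By canonicity `x₁` is at most the code of the permuted first row, a number with at most `s`
base-`p` digits, hence at most `p^s - 1`.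
-/

open Finset Equiv

theorem Finset.sum_range_card_le_sum {M : Type*} [AddCommMonoid M] [PartialOrder M]
    [IsOrderedAddMonoid M] {f : ℕ → M} (hf : Monotone f) (E : Finset ℕ) :
    ∑ k ∈ range #E, f k ≤ ∑ e ∈ E, f e := by
  induction E using Finset.induction_on_max with
  | empty => simp
  | insert a E hlt ih =>
    have haE : a ∉ E := fun ha => (hlt a ha).false
    have hcard : #E ≤ a := by
      simpa using card_le_card (show E ⊆ range a from fun x hx => mem_range.2 (hlt x hx))
    rw [card_insert_of_notMem haE, sum_range_succ, sum_insert haE, add_comm]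
    exact add_le_add (hf hcard) ih

theorem Finset.exists_perm_image_eq {α : Type*} [DecidableEq α] {S T : Finset α}
    (h : #S = #T) : ∃ σ : Perm α, S.image σ = T := by
  have := Set.powersetCard.isPretransitive (α := α) (n := #T)
  obtain ⟨σ, hσ⟩ := MulAction.exists_smul_eq (Perm α)
    (⟨S, h⟩ : Set.powersetCard α #T) ⟨T, rfl⟩
  refine ⟨σ, ?_⟩
  simpa [Finset.smul_finset_def, Perm.smul_def] using congrArg Subtype.val hσ

theorem Fin.card_filter_sub_one_sub_val_lt (m s : ℕ) :
    #{j : Fin m | m - 1 - (j : ℕ) < s} = min m s := by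
  rw [← Fin.card_filter_val_lt]
  exact card_equiv Fin.revPerm fun j => by simp [Fin.val_rev]; omega

section DigitSums

variable {ι : Type*} [Fintype ι] {e : ι → ℕ} {p : ℕ}

theorem geom_sum_card_support_le_sum_mul_pow (he : Function.Injective e) (hp : 1 ≤ p)
    (d : ι → ℕ) : ∑ k ∈ range #{i | d i ≠ 0}, p ^ k ≤ ∑ i, d i * p ^ e i := by
  set S : Finset ι := {i | d i ≠ 0}
  calc ∑ k ∈ range #S, p ^ k
      = ∑ k ∈ range #(S.map ⟨e, he⟩), p ^ k := by rw [card_map]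
    _ ≤ ∑ k ∈ S.map ⟨e, he⟩, p ^ k := sum_range_card_le_sum (pow_right_mono₀ hp) _
    _ = ∑ i ∈ S, p ^ e i := sum_map _ _ _
    _ ≤ ∑ i ∈ S, d i * p ^ e i :=
        sum_le_sum fun i hi => Nat.le_mul_of_pos_left _ (Nat.pos_of_ne_zero (mem_filter.1 hi).2)
    _ ≤ ∑ i, d i * p ^ e i := sum_le_sum_of_subset (subset_univ S)

theorem sum_mul_pow_lt_pow (he : Function.Injective e) (hp : 0 < p) {d : ι → ℕ}
    (hd : ∀ i, d i < p) {s : ℕ} (hs : ∀ i, d i ≠ 0 → e i < s) :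
    ∑ i, d i * p ^ e i < p ^ s := by
  set S : Finset ι := {i | d i ≠ 0}
  have hS : S.map ⟨e, he⟩ ⊆ range s := by
    intro k hk
    obtain ⟨i, hi, rfl⟩ := mem_map.1 hk
    exact mem_range.2 (hs i (mem_filter.1 hi).2)
  calc ∑ i, d i * p ^ e i
      = ∑ i ∈ S, d i * p ^ e i :=
        (sum_filter_of_ne fun i _ hi => left_ne_zero_of_mul hi).symm
    _ ≤ ∑ i ∈ S, (p - 1) * p ^ e i :=
        sum_le_sum fun i _ => Nat.mul_le_mul_right _ (Nat.le_sub_one_of_lt (hd i))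
    _ = (p - 1) * ∑ k ∈ S.map ⟨e, he⟩, p ^ k := by rw [sum_map, mul_sum]; rfl
    _ ≤ (p - 1) * ∑ k ∈ range s, p ^ k := Nat.mul_le_mul_left _ (sum_le_sum_of_subset hS)
    _ < p ^ s := by
        have := geom_sum_mul_add (p - 1) s
        rw [Nat.sub_one_add_one hp.ne'] at this
        lia

end DigitSums

theorem rowCode_le_rowCode_comp_perm_of_canonical {p n m : ℕ} {A : Fin n → Fin m → Fin p}
    (hA : Canonical p n m A) (hn : 0 < n) (τ : Perm (Fin m)) :
    rowCode p n m A ⟨0, hn⟩ ≤ rowCode p n m (fun i j => A i (τ j)) ⟨0, hn⟩ :=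
  Pi.apply_le_of_toLex (hA _ ⟨1, τ, fun _ _ => rfl⟩) fun _ hj => absurd hj (Nat.not_lt_zero _)

/-- for a canonical matrix whose first row has exactly `s` nonzero
entries, `(p^s - 1)/(p - 1) ≤ x₁ ≤ p^s - 1`. -/
theorem stmt14 (p n m : ℕ) (hp : 2 ≤ p) (hn : 0 < n)
    (A : Fin n → Fin m → Fin p) (hA : Canonical p n m A)
    (s : ℕ) (hs : s = (Finset.univ.filter fun j : Fin m => (A ⟨0, hn⟩ j : ℕ) ≠ 0).card) :
    (p ^ s - 1) / (p - 1) ≤ rowCode p n m A ⟨0, hn⟩ ∧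
      rowCode p n m A ⟨0, hn⟩ ≤ p ^ s - 1 := by
  have hinj : Function.Injective fun j : Fin m => m - 1 - (j : ℕ) := fun a b hab => by
    have := a.isLt; have := b.isLt; simp only at hab; omega
  constructor
  · rw [← Nat.geomSum_eq hp, hs]
    exact geom_sum_card_support_le_sum_mul_pow hinj (by omega) _
  · set T : Finset (Fin m) := {j | m - 1 - (j : ℕ) < s}
    have hT : #T = s := by
      rw [Fin.card_filter_sub_one_sub_val_lt, min_eq_right]
      simpa [hs] using card_le_univ {j : Fin m | (A ⟨0, hn⟩ j : ℕ) ≠ 0}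
    obtain ⟨τ, hτ⟩ := exists_perm_image_eq (hT.trans hs)
    refine Nat.le_sub_one_of_lt ((rowCode_le_rowCode_comp_perm_of_canonical hA hn τ).trans_lt
      (sum_mul_pow_lt_pow hinj (by omega) (fun j => (A ⟨0, hn⟩ (τ j)).isLt) fun j hj => ?_))
    have : τ j ∈ T.image τ := by rw [hτ]; simpa using hj
    simpa [T] using this
end
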